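/- Let M and M̂ be random variables on a finite set ℳ with joint distribution Q, where M is uniformly distributed on ℳ. If D(Q_{M̂} ‖ Q_M) ≤ δ, then |H(M) − H(M̂)| ≤ δ + √(2δ)·log|ℳ|. -/

import Mathlib

/-!
Against the uniform distribution the divergence is exactly the entropy gap:
`D(P ‖ U) = log |ℳ| - H(P)`. Gibbs' inequality makes this gap nonnegative, so
`|H(M) - H(M̂)| = D(Q_M̂ ‖ Q_M) ≤ δ`, which is already below the stated bound.
-/

open Finset

open Classical in
/-- Kullback–Leibler divergence (base 2), summed over the support of the first argument. -/
noncomputable def KL {X : Type*} [Fintype X] (P Q : X → ℝ) : ℝ :=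
  ∑ x, if 0 < P x then P x * Real.logb 2 (P x / Q x) else 0

/-- Shannon entropy (base 2) of a pmf on a finite alphabet. -/
noncomputable def ent {X : Type*} [Fintype X] (q : X → ℝ) : ℝ :=
  -∑ x, q x * Real.logb 2 (q x)

theorem sub_div_log_two_le_mul_logb {p q : ℝ} (hp : 0 < p) (hq : 0 < q) :
    (p - q) / Real.log 2 ≤ p * Real.logb 2 (p / q) := by
  have hlog : p * (1 - (p / q)⁻¹) ≤ p * Real.log (p / q) :=
    mul_le_mul_of_nonneg_left (Real.one_sub_inv_le_log_of_pos (div_pos hp hq)) hp.le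
  rw [Real.logb, ← mul_div_assoc]
  refine div_le_div_of_nonneg_right ?_ (Real.log_pos one_lt_two).le
  calc p - q = p * (1 - (p / q)⁻¹) := by field_simp
    _ ≤ p * Real.log (p / q) := hlog

theorem KL_nonneg {X : Type*} [Fintype X] {P Q : X → ℝ} (hQ : ∀ x, 0 ≤ Q x)
    (hPQ : ∀ x, 0 < P x → 0 < Q x) (hsum : ∑ x, Q x ≤ ∑ x, P x) : 0 ≤ KL P Q := by
  classical
  have hterm : ∀ x, (P x - Q x) / Real.log 2 ≤
      if 0 < P x then P x * Real.logb 2 (P x / Q x) else 0 := by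
    intro x
    split_ifs with hP
    · exact sub_div_log_two_le_mul_logb hP (hPQ x hP)
    · exact div_nonpos_of_nonpos_of_nonneg (by linarith [hQ x, not_lt.mp hP])
        (Real.log_pos one_lt_two).le
  calc (0 : ℝ) ≤ (∑ x, P x - ∑ x, Q x) / Real.log 2 :=
        div_nonneg (by linarith) (Real.log_pos one_lt_two).le
    _ = ∑ x, (P x - Q x) / Real.log 2 := by rw [← sum_sub_distrib, sum_div]
    _ ≤ KL P Q := sum_le_sum fun x _ => hterm x

theorem ent_uniform {X : Type*} [Fintype X] :
    ent (fun _ : X => (Fintype.card X : ℝ)⁻¹) = Real.logb 2 (Fintype.card X) := by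
  rcases Nat.eq_zero_or_pos (Fintype.card X) with hX | hX
  · simp [ent, hX]
  · have hc : (Fintype.card X : ℝ) ≠ 0 := by positivity
    simp only [ent, sum_const, card_univ, nsmul_eq_mul, Real.logb_inv]
    field_simp

theorem KL_uniform {X : Type*} [Fintype X] {P : X → ℝ} (hP : ∀ x, 0 ≤ P x)
    (hP1 : ∑ x, P x = 1) :
    KL P (fun _ => (Fintype.card X : ℝ)⁻¹) = Real.logb 2 (Fintype.card X) - ent P := by
  classical
  have hc : (Fintype.card X : ℝ) ≠ 0 := by
    have : Nonempty X := by
      by_contra h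
      simp [not_nonempty_iff.mp h] at hP1
    positivity
  have hterm : ∀ x, (if 0 < P x then P x * Real.logb 2 (P x / (Fintype.card X : ℝ)⁻¹) else 0)
      = P x * Real.logb 2 (P x) + P x * Real.logb 2 (Fintype.card X) := by
    intro x
    rcases (hP x).lt_or_eq with h | h
    · rw [if_pos h, div_inv_eq_mul, Real.logb_mul h.ne' hc, mul_add]
    · simp [← h]
  rw [KL, sum_congr rfl fun x _ => hterm x, sum_add_distrib, ← sum_mul, hP1, ent]
  ring

theorem entropy_close_of_kl_small_general {M : Type*} [Fintype M]
    (QM QMhat : M → ℝ)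
    (hQM : ∀ m, QM m = (Fintype.card M : ℝ)⁻¹)
    (hQMhat : (∀ m, 0 ≤ QMhat m) ∧ ∑ m, QMhat m = 1)
    (δ : ℝ) (hKL : KL QMhat QM ≤ δ) :
    |ent QM - ent QMhat| ≤ δ + Real.sqrt (2 * δ) * Real.logb 2 (Fintype.card M) := by
  obtain ⟨hP, hP1⟩ := hQMhat
  have hU : QM = fun _ => (Fintype.card M : ℝ)⁻¹ := funext hQM
  have hgap : KL QMhat QM = ent QM - ent QMhat := by rw [hU, KL_uniform hP hP1, ent_uniform]
  have hQMpos : ∀ m, 0 < QM m := fun m => by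
    have : Nonempty M := ⟨m⟩
    rw [hQM]
    positivity
  have hQMsum : ∑ m, QM m ≤ ∑ m, QMhat m := by
    rw [hU, hP1, sum_const, card_univ, nsmul_eq_mul]
    exact mul_inv_le_one
  have hKL0 : 0 ≤ KL QMhat QM := KL_nonneg (fun m => (hQMpos m).le) (fun m _ => hQMpos m) hQMsum
  have hlogc : 0 ≤ Real.logb 2 (Fintype.card M) :=
    div_nonneg (Real.log_natCast_nonneg _) (Real.log_pos one_lt_two).le
  rw [← hgap, abs_of_nonneg hKL0]
  exact hKL.trans (le_add_of_nonneg_right (mul_nonneg (Real.sqrt_nonneg _) hlogc))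

/-- if `M` is uniform on the finite set `ℳ` and
`D(Q_M̂ ‖ Q_M) ≤ δ`, then `|H(M) − H(M̂)| ≤ δ + √(2δ)·log|ℳ|`. -/
theorem entropy_close_of_kl_small {M : Type*} [Fintype M] [Nonempty M]
    (QM QMhat : M → ℝ)
    (hQM : ∀ m, QM m = (Fintype.card M : ℝ)⁻¹)
    (hQMhat : (∀ m, 0 ≤ QMhat m) ∧ ∑ m, QMhat m = 1)
    (δ : ℝ) (hKL : KL QMhat QM ≤ δ) :
    |ent QM - ent QMhat| ≤ δ + Real.sqrt (2 * δ) * Real.logb 2 (Fintype.card M) :=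
  entropy_close_of_kl_small_general QM QMhat hQM hQMhat δ hKL
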